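/- arXiv:2209.03980 — 2 statements merged into one kernel-verified Lean document; each statement's English description precedes it below -/
import Mathlib

section
/- Let p be a prime, G̃ the Vilenkin group, and φ ∈ L²(G̃). Let f₁, f₂ ∈ ⟨φ⟩ and let m₁, m₂ ∈ L²(U*) (extended H⊥-periodically to G̃*) satisfy f̂ᵢ(Bω) = mᵢ(ω)φ̂(ω) a.e. for i = 1, 2. Then for a.e. ω: [f̂₁, f̂₂](Bω) = Σ_{ζ=0}^{p−1} m₁(ω ⊕ 0.ζ) · conj(m₂(ω ⊕ 0.ζ)) · P_φ(ω ⊕ 0.ζ). -/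
/-!
Common setting: the Vilenkin group `Vil p` (sequences `ℤ → ZMod p` vanishing
below some index), its discrete subgroup `H`, the neighbourhood `U`,
the shift automorphism, the generalized characters, and a bundled structure
`VilenkinSetting` carrying the Haar measures on the group and on its dual
(realized on the same underlying sequence space), the Plancherel (Fourier)
transform, translations and the dilation operator, with their standard
compatibility properties.
-/

open MeasureTheory Filter Topology
open scoped ENNReal NNReal Pointwise Classical ComplexConjugate

noncomputable section

/-- The underlying additive group of the Vilenkin group: sequences
`x : ℤ → ZMod p` with `x j = 0` for all `j` below some `k = k(x)`. -/
def vilCarrier (p : ℕ) : AddSubgroup (ℤ → ZMod p) where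
  carrier := {x | ∃ k : ℤ, ∀ j < k, x j = 0}
  zero_mem' := ⟨0, fun _ _ => rfl⟩
  add_mem' := by
    rintro a b ⟨k, hk⟩ ⟨l, hl⟩
    refine ⟨min k l, fun j hj => ?_⟩
    have h1 := hk j (lt_of_lt_of_le hj (min_le_left _ _))
    have h2 := hl j (lt_of_lt_of_le hj (min_le_right _ _))
    simp_all [Pi.add_apply]
  neg_mem' := by
    rintro a ⟨k, hk⟩
    exact ⟨k, fun j hj => by simp [hk j hj]⟩

/-- The Vilenkin group (as a type). The dual group `G̃*` is realized on the
same type of sequences. -/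
abbrev Vil (p : ℕ) : Type := vilCarrier p

/-- The discrete subgroup `H = {x : x_j = 0 for j > 0}` of the Vilenkin group.
On the dual side the same subgroup realizes the annihilator `H⊥`. -/
def Hsub (p : ℕ) : AddSubgroup (Vil p) where
  carrier := {x | ∀ j > 0, (x : ℤ → ZMod p) j = 0}
  zero_mem' := fun _ _ => rfl
  add_mem' := by
    intro a b ha hb j hj
    simp [ha j hj, hb j hj]
  neg_mem' := by
    intro a ha j hj
    simp [ha j hj]

/-- The subgroup-neighbourhoods `U_l = {x : x_j = 0 for j ≤ l}` (as sets). -/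
def UsetL (p : ℕ) (l : ℤ) : Set (Vil p) := {x | ∀ j ≤ l, (x : ℤ → ZMod p) j = 0}

/-- `U = U_0`; on the dual side this realizes `U*`. -/
def Uset (p : ℕ) : Set (Vil p) := UsetL p 0

/-- The topology of the Vilenkin group, generated by cosets of the `U_l`. -/
instance (p : ℕ) : TopologicalSpace (Vil p) :=
  TopologicalSpace.generateFrom {s | ∃ (x : Vil p) (l : ℤ), s = (x + ·) '' UsetL p l}

/-- The Borel σ-algebra on the Vilenkin group. -/
instance (p : ℕ) : MeasurableSpace (Vil p) := borel (Vil p)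

/-- The shift automorphism `A` (resp. `B` on the dual side): `(Ax)_j = x_{j+1}`. -/
def shiftMap (p : ℕ) : Vil p ≃+ Vil p where
  toFun x := ⟨fun j => (x : ℤ → ZMod p) (j + 1), by
    obtain ⟨k, hk⟩ := x.2
    exact ⟨k - 1, fun j hj => hk _ (by omega)⟩⟩
  invFun x := ⟨fun j => (x : ℤ → ZMod p) (j - 1), by
    obtain ⟨k, hk⟩ := x.2
    exact ⟨k + 1, fun j hj => hk _ (by omega)⟩⟩
  left_inv x :=
    Subtype.ext (funext fun j =>
      congrArg (x : ℤ → ZMod p) (show j - 1 + 1 = j by omega))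
  right_inv x :=
    Subtype.ext (funext fun j =>
      congrArg (x : ℤ → ZMod p) (show j + 1 - 1 = j by omega))
  map_add' x y := by
    apply Subtype.ext
    funext j
    rfl

/-- The element `0.ζ` of the (dual) Vilenkin group: coordinate `ζ` in
position `1` and `0` elsewhere. -/
def dotEl (p : ℕ) (ζ : ZMod p) : Vil p :=
  ⟨fun j => if j = 1 then ζ else 0, ⟨1, fun j hj => if_neg (by omega)⟩⟩

/-- The generalized Walsh character pairing
`χ(x, ω) = exp((2πi/p) Σ_j x_j ω_{1-j})`. -/
def vilChar (p : ℕ) (x ω : Vil p) : ℂ :=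
  Complex.exp (2 * Real.pi * Complex.I *
    (((∑ᶠ j : ℤ, (x : ℤ → ZMod p) j * (ω : ℤ → ZMod p) (1 - j)).val : ℂ) / (p : ℂ)))

/-- A bundled Vilenkin-group setting: Haar measures `μ` (on `G̃`) and `ν`
(on the dual `G̃*`, realized on the same sequence space), normalized so that
`U` (resp. `U*`) has measure one, the Plancherel/Fourier transform `F`,
the translation operators `T`, the dilation operator `Dil`, and their
standard compatibility properties. -/
structure VilenkinSetting (p : ℕ) where
  /-- Haar measure on the Vilenkin group `G̃`. -/
  μ : Measure (Vil p)
  /-- Haar measure on the dual group `G̃*`. -/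
  ν : Measure (Vil p)
  μ_inv : ∀ g : Vil p, MeasurePreserving (fun x => x + g) μ μ
  ν_inv : ∀ g : Vil p, MeasurePreserving (fun x => x + g) ν ν
  μ_U : μ (Uset p) = 1
  ν_U : ν (Uset p) = 1
  /-- The Fourier (Plancherel) transform `f ↦ f̂`, a unitary from `L²(G̃)`
  onto `L²(G̃*)`. -/
  F : Lp ℂ 2 μ ≃ₗᵢ[ℂ] Lp ℂ 2 ν
  /-- The translation operators `T_g f = f(· ⊖ g)`. -/
  T : Vil p → (Lp ℂ 2 μ ≃ₗᵢ[ℂ] Lp ℂ 2 μ)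
  T_apply : ∀ (g : Vil p) (f : Lp ℂ 2 μ),
    (T g f : Vil p → ℂ) =ᵐ[μ] fun x => f (x - g)
  F_T : ∀ h ∈ Hsub p, ∀ f : Lp ℂ 2 μ,
    (F (T h f) : Vil p → ℂ) =ᵐ[ν] fun ω => vilChar p h ω * F f ω
  /-- The dilation operator `(𝔻f)(x) = p^{1/2} f(Ax)`. -/
  Dil : Lp ℂ 2 μ ≃ₗᵢ[ℂ] Lp ℂ 2 μ
  Dil_apply : ∀ f : Lp ℂ 2 μ,
    (Dil f : Vil p → ℂ) =ᵐ[μ] fun x => (Real.sqrt p : ℂ) * f (shiftMap p x)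
  F_Dil : ∀ f : Lp ℂ 2 μ,
    (F (Dil f) : Vil p → ℂ) =ᵐ[ν] fun ω =>
      ((Real.sqrt p)⁻¹ : ℂ) * F f ((shiftMap p).symm ω)

namespace VilenkinSetting

variable {p : ℕ} (S : VilenkinSetting p)

/-- The principal shift-invariant space `⟨φ⟩`, the closed linear span of the
translates `T_h φ`, `h ∈ H`. -/
def pSIS (φ : Lp ℂ 2 S.μ) : Submodule ℂ (Lp ℂ 2 S.μ) :=
  (Submodule.span ℂ (Set.range fun h : Hsub p => S.T h φ)).topologicalClosure

/-- Periodization of a function on the dual group: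
`Σ_{h ∈ H⊥} |g(ω ⊕ h)|²` (valued in `ℝ≥0∞`). -/
def perF (g : Vil p → ℂ) (ω : Vil p) : ℝ≥0∞ :=
  ∑' h : Hsub p, (‖g (ω + (h : Vil p))‖₊ : ℝ≥0∞) ^ 2

/-- The periodization function `P_φ(ω) = Σ_{h ∈ H⊥} |φ̂(ω ⊕ h)|²`. -/
def Pper (φ : Lp ℂ 2 S.μ) (ω : Vil p) : ℝ≥0∞ :=
  perF (S.F φ) ω

/-- `E_φ = supp P_φ`. -/
def Eset (φ : Lp ℂ 2 S.μ) : Set (Vil p) := {ω | S.Pper φ ω ≠ 0}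

/-- `V_φ = {ω ∈ U* : φ̂_{‖ω} ≠ 0}`. -/
def Vset (φ : Lp ℂ 2 S.μ) : Set (Vil p) :=
  {ω ∈ Uset p | ∃ h ∈ Hsub p, S.F φ (ω + h) ≠ 0}

/-- The spectrum `η(𝕊) = {ω ∈ U* : 𝕊̂_{‖ω} ≠ {0}}` of a subspace
`𝕊 ⊆ L²(G̃)`. -/
def spec (V : Submodule ℂ (Lp ℂ 2 S.μ)) : Set (Vil p) :=
  {ω ∈ Uset p | ∃ f ∈ V, ∃ h ∈ Hsub p, S.F f (ω + h) ≠ 0}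

/-- The quantity `Σ_{h∈H} |⟨f, T_h φ⟩|²` appearing in the frame conditions. -/
def frameSum (φ f : Lp ℂ 2 S.μ) : ℝ :=
  ∑' h : Hsub p, ‖(inner ℂ f (S.T h φ) : ℂ)‖ ^ 2

/-- `(T_h φ)_{h∈H}` is a Bessel sequence with some bound `b > 0`. -/
def IsBessel (φ : Lp ℂ 2 S.μ) : Prop :=
  ∃ b : ℝ, 0 < b ∧ ∀ f : Lp ℂ 2 S.μ, S.frameSum φ f ≤ b * ‖f‖ ^ 2

/-- `(T_h φ)_{h∈H}` is a frame for the closed subspace `W` with bounds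
`a ≤ b`: the translates span `W` and the frame inequalities hold on `W`. -/
def IsFrameFor (φ : Lp ℂ 2 S.μ) (W : Submodule ℂ (Lp ℂ 2 S.μ)) (a b : ℝ) : Prop :=
  S.pSIS φ = W ∧
    ∀ f ∈ W, a * ‖f‖ ^ 2 ≤ S.frameSum φ f ∧ S.frameSum φ f ≤ b * ‖f‖ ^ 2

/-- `(T_h φ)_{h∈H}` is a Parseval frame for the closed subspace `W`. -/
def IsParsevalFrameFor (φ : Lp ℂ 2 S.μ) (W : Submodule ℂ (Lp ℂ 2 S.μ)) : Prop :=
  S.pSIS φ = W ∧ ∀ f ∈ W, S.frameSum φ f = ‖f‖ ^ 2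

/-- The common part of the definitions of MRA and FMRA: a nested sequence of
closed subspaces, compatible with the dilation, with dense union and trivial
intersection. -/
def IsLadder (V : ℤ → Submodule ℂ (Lp ℂ 2 S.μ)) : Prop :=
  (∀ j, IsClosed (V j : Set (Lp ℂ 2 S.μ))) ∧
  (∀ j, V j ≤ V (j + 1)) ∧
  (∀ j, ∀ f : Lp ℂ 2 S.μ, f ∈ V j ↔ S.Dil f ∈ V (j + 1)) ∧
  Dense (⋃ j : ℤ, (V j : Set (Lp ℂ 2 S.μ))) ∧
  (∀ f : Lp ℂ 2 S.μ, (∀ j : ℤ, f ∈ V j) → f = 0)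

/-- `(V_j)` is an MRA with scaling function `φ`: the translates of `φ` form
an orthonormal basis of `V₀`. -/
def IsMRA (V : ℤ → Submodule ℂ (Lp ℂ 2 S.μ)) (φ : Lp ℂ 2 S.μ) : Prop :=
  S.IsLadder V ∧ φ ∈ V 0 ∧ S.pSIS φ = V 0 ∧
    Orthonormal ℂ (fun h : Hsub p => S.T h φ)

/-- `(V_j)` is an FMRA with scaling function `φ` and frame bounds `a ≤ b`. -/
def IsFMRAWith (V : ℤ → Submodule ℂ (Lp ℂ 2 S.μ)) (φ : Lp ℂ 2 S.μ) (a b : ℝ) : Prop :=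
  S.IsLadder V ∧ φ ∈ V 0 ∧ 0 < a ∧ a ≤ b ∧ S.IsFrameFor φ (V 0) a b

/-- `(V_j)` is an FMRA with scaling function `φ`. -/
def IsFMRA (V : ℤ → Submodule ℂ (Lp ℂ 2 S.μ)) (φ : Lp ℂ 2 S.μ) : Prop :=
  ∃ a b : ℝ, S.IsFMRAWith V φ a b

/-- `(V_j)` is a Parseval FMRA with scaling function `φ`. -/
def IsParsevalFMRA (V : ℤ → Submodule ℂ (Lp ℂ 2 S.μ)) (φ : Lp ℂ 2 S.μ) : Prop :=
  S.IsLadder V ∧ φ ∈ V 0 ∧ S.IsParsevalFrameFor φ (V 0)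

/-- `m` is an `H⊥`-periodic function belonging to `L²(U*)` (extended
`H⊥`-periodically to the whole dual group). -/
def IsFilter (m : Vil p → ℂ) : Prop :=
  (∀ ω : Vil p, ∀ h ∈ Hsub p, m (ω + h) = m ω) ∧
    MemLp m 2 (S.ν.restrict (Uset p))

/-- The bracket `[g₁, g₂](ω) = Σ_{h∈H⊥} g₁(ω ⊕ h) conj (g₂(ω ⊕ h))`. -/
def brkt (g₁ g₂ : Vil p → ℂ) (ω : Vil p) : ℂ :=
  ∑' h : Hsub p, g₁ (ω + (h : Vil p)) * conj (g₂ (ω + (h : Vil p)))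

end VilenkinSetting

/-! ### Additional notions used in the Cantor-dyadic-group (p = 2) setting -/

/-- `Λ₁ = {n ∈ Λ : σ n ∈ Λ}`. -/
def Lam1 (p : ℕ) : Set (Vil p) :=
  {n | n ∈ Hsub p ∧ (shiftMap p).symm n ∈ Hsub p}

/-- `Λ ∖ Λ₁`. -/
def LamO (p : ℕ) : Set (Vil p) := (Hsub p : Set (Vil p)) \ Lam1 p

namespace VilenkinSetting

variable {p : ℕ} (S : VilenkinSetting p)

/-- `Σ_{n ∈ s} |φ̂(σ(ω + n))|²` for a subset `s` of the lattice. -/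
def sumShift (φ : Lp ℂ 2 S.μ) (s : Set (Vil p)) (ω : Vil p) : ℝ≥0∞ :=
  ∑' n : s, (‖S.F φ ((shiftMap p).symm (ω + (n : Vil p)))‖₊ : ℝ≥0∞) ^ 2

/-- `Δ₂ = {ω ∈ D : Σ_{n∈Λ₁}|φ̂(σ(ω+n))|² ≠ 0 and Σ_{n∈Λ∖Λ₁}|φ̂(σ(ω+n))|² ≠ 0}`. -/
def Delta2 (φ : Lp ℂ 2 S.μ) : Set (Vil p) :=
  {ω ∈ Uset p | S.sumShift φ (Lam1 p) ω ≠ 0 ∧ S.sumShift φ (LamO p) ω ≠ 0}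

/-- `Δ₁`: exactly one of the two partial periodizations is nonzero. -/
def Delta1 (φ : Lp ℂ 2 S.μ) : Set (Vil p) :=
  {ω ∈ Uset p |
    (S.sumShift φ (Lam1 p) ω ≠ 0 ∧ S.sumShift φ (LamO p) ω = 0) ∨
    (S.sumShift φ (Lam1 p) ω = 0 ∧ S.sumShift φ (LamO p) ω ≠ 0)}

/-- The blocked set `E = {ω ∈ Δ₂ : m(σω) = m(σω + 0.1) = 0}`. -/
def blockedSet (φ : Lp ℂ 2 S.μ) (m : Vil p → ℂ) : Set (Vil p) :=
  {ω ∈ S.Delta2 φ |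
    m ((shiftMap p).symm ω) = 0 ∧ m ((shiftMap p).symm ω + dotEl p 1) = 0}

/-- The spectrum `η(V₀) = {ω ∈ D : Σ_{n∈Λ}|φ̂(ω+n)|² ≠ 0}` of `V₀ = ⟨φ⟩`. -/
def etaV0 (φ : Lp ℂ 2 S.μ) : Set (Vil p) := {ω ∈ Uset p | S.Pper φ ω ≠ 0}

/-- `W₀`, the orthogonal complement of `V₀` in `V₁`. -/
def Wcompl (V : ℤ → Submodule ℂ (Lp ℂ 2 S.μ)) : Submodule ℂ (Lp ℂ 2 S.μ) :=
  V 1 ⊓ (V 0)ᗮ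

/-- Integer powers `𝔻^j` of the dilation operator. -/
def dilZ (j : ℤ) (f : Lp ℂ 2 S.μ) : Lp ℂ 2 S.μ :=
  if 0 ≤ j then (fun g => S.Dil g)^[j.toNat] f
  else (fun g => S.Dil.symm g)^[(-j).toNat] f

end VilenkinSetting

namespace VilenkinSetting

/-- The filter `m_ψ` of the candidate frame wavelet on the Cantor dyadic
group (`p = 2`):
`m_ψ(ω) = (−1)^{ω₀} conj(m(σω + 0.1)) Σ_{n'∈Λ∖Λ₁}|φ̂(σ(ω+n'))|²` on `Δ₂ + Λ`,
`1` on `(Δ₁ ∩ η(V₀)ᶜ) + Λ` and `0` otherwise. -/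
def mpsi (S : VilenkinSetting 2) (φ : Lp ℂ 2 S.μ) (m : Vil 2 → ℂ) (ω : Vil 2) : ℂ :=
  if ω ∈ S.Delta2 φ + (Hsub 2 : Set (Vil 2)) then
    (-1 : ℂ) ^ ((ω : ℤ → ZMod 2) 0).val *
      conj (m ((shiftMap 2).symm ω + dotEl 2 1)) *
      ((S.sumShift φ (LamO 2) ω).toReal : ℂ)
  else if ω ∈ (S.Delta1 φ ∩ (S.etaV0 φ)ᶜ) + (Hsub 2 : Set (Vil 2)) then 1
  else 0

/-- `ψ̂ = m_ψ · (φ̂ ∘ σ)`, the Fourier transform of the candidate frame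
wavelet. -/
def psiHat (S : VilenkinSetting 2) (φ : Lp ℂ 2 S.μ) (m : Vil 2 → ℂ) (ω : Vil 2) : ℂ :=
  S.mpsi φ m ω * S.F φ ((shiftMap 2).symm ω)

end VilenkinSetting

/-!
On a coset `ω ⊕ 0.ζ ⊕ H⊥` the refinement equations and the `H⊥`-periodicity of the `mᵢ` give
`f̂₁(B·) conj f̂₂(B·) = m₁(ω ⊕ 0.ζ) conj m₂(ω ⊕ 0.ζ) |φ̂|²`, and `B` maps the disjoint union
of these `p` cosets onto `Bω ⊕ H⊥`. So the series defining `[f̂₁, f̂₂](Bω)` splits into `p`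
series, the `ζ`-th summing to `m₁ conj m₂ P_φ` at `ω ⊕ 0.ζ`. The splitting is legitimate
wherever these `P_φ` are finite, which holds a.e.: `U*` is a fundamental domain for `H⊥`, so
`∫_{U*} P_φ = ‖φ̂‖₂² < ∞`.
-/

lemma summable_prod_of_finite_left {α β E : Type*} [Finite α] [NormedAddCommGroup E]
    [CompleteSpace E] {f : α × β → E} (hf : ∀ a, Summable fun b => ‖f (a, b)‖) :
    Summable f :=
  .of_norm <| (summable_prod_of_nonneg fun _ => norm_nonneg _).2 ⟨hf, .of_finite⟩

lemma Finset.sum_range_eq_sum_zmod {M : Type*} [AddCommMonoid M] (n : ℕ) [NeZero n]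
    (F : ZMod n → M) : ∑ k ∈ Finset.range n, F k = ∑ z : ZMod n, F z :=
  Finset.sum_nbij' (fun k => (k : ZMod n)) ZMod.val (fun _ _ => Finset.mem_univ _)
    (fun z _ => Finset.mem_range.2 (ZMod.val_lt z))
    (fun _ hk => ZMod.val_cast_of_lt (Finset.mem_range.1 hk))
    (fun z _ => ZMod.natCast_zmod_val z) (fun _ _ => rfl)

instance (p : ℕ) : Countable (ZMod p) := by
  cases p
  · exact inferInstanceAs (Countable ℤ)
  · infer_instance

instance (p : ℕ) : Countable (Hsub p) := by
  refine Function.Injective.countable (f := fun h : Hsub p =>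
    Finsupp.ofSupportFinite ((h : Vil p) : ℤ → ZMod p) ?_) ?_
  · obtain ⟨k, hk⟩ := (h : Vil p).2
    refine (Set.finite_Icc k 0).subset fun j hj => ⟨?_, ?_⟩
    · by_contra hlt; exact hj (hk j (by omega))
    · by_contra hgt; exact hj (h.2 j (by omega))
  · intro a b hab
    exact Subtype.ext (Subtype.ext (funext fun j => DFunLike.congr_fun hab j))

instance (p : ℕ) : BorelSpace (Vil p) := ⟨rfl⟩

namespace Vil

variable {p : ℕ}

lemma continuous_add_left (c : Vil p) : Continuous (c + · : Vil p → Vil p) := by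
  refine continuous_generateFrom_iff.2 ?_
  rintro _ ⟨x, l, rfl⟩
  refine TopologicalSpace.GenerateOpen.basic _ ⟨x - c, l, ?_⟩
  ext y
  simp only [Set.mem_preimage, Set.mem_image]
  refine exists_congr fun u => and_congr_right fun _ => ?_
  constructor <;> intro h
  · rw [sub_add_eq_add_sub, h, add_sub_cancel_left]
  · rw [← h, sub_add_eq_add_sub, add_sub_cancel]

instance : MeasurableConstVAdd (Hsub p) (Vil p) :=
  ⟨fun h => (continuous_add_left (h : Vil p)).measurable⟩

lemma measurableSet_Uset : MeasurableSet (Uset p) :=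
  IsOpen.measurableSet (TopologicalSpace.GenerateOpen.basic _ ⟨0, 0, by simp [Uset]⟩)

lemma existsUnique_vadd_mem_Uset (x : Vil p) : ∃! h : Hsub p, h +ᵥ x ∈ Uset p := by
  obtain ⟨k, hk⟩ := x.2
  refine ⟨-⟨⟨fun j => if j ≤ 0 then (x : ℤ → ZMod p) j else 0,
      ⟨k, fun j hj => by simp [hk j hj]⟩⟩, fun j hj => if_neg (by omega)⟩, fun j hj => ?_, ?_⟩
  · show -(if j ≤ 0 then (x : ℤ → ZMod p) j else 0) + (x : ℤ → ZMod p) j = 0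
    simp [hj]
  · rintro h hh
    refine Subtype.ext (Subtype.ext (funext fun j => ?_))
    show (h : ℤ → ZMod p) j = -(if j ≤ 0 then (x : ℤ → ZMod p) j else 0)
    split_ifs with hj
    · exact eq_neg_of_add_eq_zero_left (hh j hj)
    · simpa using h.2 j (by omega)

end Vil

/-- `B` maps the coset `0.ζ ⊕ H⊥` of `B⁻¹(H⊥)` onto `{h ∈ H⊥ : h₀ = ζ}`. -/
def cosetShiftEquiv (p : ℕ) : ZMod p × Hsub p ≃ Hsub p where
  toFun x := ⟨shiftMap p (dotEl p x.1 + x.2), fun j hj => by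
    show (if j + 1 = 1 then x.1 else 0) + ((x.2 : Vil p) : ℤ → ZMod p) (j + 1) = 0
    rw [if_neg (by omega), x.2.2 (j + 1) (by omega), add_zero]⟩
  invFun h := (((h : Vil p) : ℤ → ZMod p) 0,
    ⟨(shiftMap p).symm h - dotEl p (((h : Vil p) : ℤ → ZMod p) 0), fun j hj => by
      show ((h : Vil p) : ℤ → ZMod p) (j - 1) -
        (if j = 1 then ((h : Vil p) : ℤ → ZMod p) 0 else 0) = 0
      split_ifs with h1
      · rw [h1, sub_self, sub_self]
      · rw [h.2 (j - 1) (by omega), sub_zero]⟩)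
  left_inv := by
    rintro ⟨ζ, r⟩
    have hζ : ((shiftMap p (dotEl p ζ + r) : Vil p) : ℤ → ZMod p) 0 = ζ := by
      show (if (1 : ℤ) = 1 then ζ else 0) + ((r : Vil p) : ℤ → ZMod p) 1 = ζ
      rw [if_pos rfl, r.2 1 one_pos, add_zero]
    refine Prod.ext hζ (Subtype.ext ?_)
    show (shiftMap p).symm (shiftMap p (dotEl p ζ + r)) - dotEl p _ = r
    rw [hζ, AddEquiv.symm_apply_apply, add_sub_cancel_left]
  right_inv h := Subtype.ext <| by
    show shiftMap p (dotEl p _ + ((shiftMap p).symm h - dotEl p _)) = h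
    rw [add_sub_cancel, AddEquiv.apply_symm_apply]

lemma coe_cosetShiftEquiv (p : ℕ) (x : ZMod p × Hsub p) :
    (cosetShiftEquiv p x : Vil p) = shiftMap p (dotEl p x.1 + x.2) := rfl

namespace VilenkinSetting

variable {p : ℕ}

lemma brkt_self_eq_tsum_norm_sq (g : Vil p → ℂ) (ω : Vil p) :
    brkt g g ω = ∑' h : Hsub p, ((‖g (ω + h)‖ ^ 2 : ℝ) : ℂ) :=
  tsum_congr fun _ => by rw [Complex.mul_conj, Complex.normSq_eq_norm_sq]

lemma brkt_shiftMap [NeZero p] (g₁ g₂ : Vil p → ℂ) (ω : Vil p)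
    (hs : ∀ ζ : ZMod p, Summable fun r : Hsub p =>
      ‖g₁ (shiftMap p (ω + dotEl p ζ + r)) * conj (g₂ (shiftMap p (ω + dotEl p ζ + r)))‖) :
    brkt g₁ g₂ (shiftMap p ω) =
      ∑ ζ : ZMod p, brkt (g₁ ∘ shiftMap p) (g₂ ∘ shiftMap p) (ω + dotEl p ζ) := by
  set F : ZMod p × Hsub p → ℂ := fun x =>
    g₁ (shiftMap p (ω + dotEl p x.1 + x.2)) * conj (g₂ (shiftMap p (ω + dotEl p x.1 + x.2)))
  have hF : brkt g₁ g₂ (shiftMap p ω) = ∑' x, F x := by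
    rw [brkt, ← (cosetShiftEquiv p).tsum_eq]
    simp only [F, coe_cosetShiftEquiv, ← map_add, add_assoc]
  have hF_sec (ζ : ZMod p) : Summable fun r => ‖F (ζ, r)‖ := hs ζ
  rw [hF, (summable_prod_of_finite_left hF_sec).tsum_prod' fun ζ => (hF_sec ζ).of_norm,
    tsum_fintype]
  rfl

variable (S : VilenkinSetting p)

instance : VAddInvariantMeasure (Hsub p) (Vil p) S.ν where
  measure_preimage_vadd h s hs := by
    simpa only [AddSubgroup.vadd_def, vadd_eq_add, add_comm (h : Vil p)] using
      (S.ν_inv h).measure_preimage hs.nullMeasurableSet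

lemma isAddFundamentalDomain_Uset : IsAddFundamentalDomain (Hsub p) (Uset p) S.ν :=
  .mk' Vil.measurableSet_Uset.nullMeasurableSet Vil.existsUnique_vadd_mem_Uset

lemma lintegral_Uset_tsum_add {g : Vil p → ℝ≥0∞} (hg : AEMeasurable g S.ν) :
    ∫⁻ ω in Uset p, ∑' h : Hsub p, g (ω + h) ∂S.ν = ∫⁻ ω, g ω ∂S.ν := by
  have hg_add (h : Hsub p) : AEMeasurable (fun ω => g (ω + h)) (S.ν.restrict (Uset p)) :=
    (hg.comp_quasiMeasurePreserving (S.ν_inv h).quasiMeasurePreserving).restrict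
  rw [lintegral_tsum hg_add, S.isAddFundamentalDomain_Uset.lintegral_eq_tsum'']
  simp only [AddSubgroup.vadd_def, vadd_eq_add, add_comm]

lemma ae_forall_add {P : Vil p → Prop} (hP : ∀ᵐ ω ∂S.ν, P ω) {ι : Type*} [Countable ι]
    (v : ι → Vil p) : ∀ᵐ ω ∂S.ν, ∀ i, P (ω + v i) :=
  ae_all_iff.2 fun i => (S.ν_inv (v i)).quasiMeasurePreserving.ae hP

lemma ae_summable_norm_sq_add {g : Vil p → ℂ} (hg : MemLp g 2 S.ν) :
    ∀ᵐ ω ∂S.ν, Summable fun h : Hsub p => ‖g (ω + h)‖ ^ 2 := by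
  set G : Vil p → ℝ≥0∞ := fun ω => ∑' h : Hsub p, ‖g (ω + h)‖ₑ ^ 2
  have hg_sq : AEMeasurable (fun ω => ‖g ω‖ₑ ^ 2) S.ν := hg.1.enorm.pow_const 2
  have hG_int : ∫⁻ ω in Uset p, G ω ∂S.ν ≠ ∞ := by
    rw [S.lintegral_Uset_tsum_add hg_sq]
    simpa using
      ((eLpNorm_lt_top_iff_lintegral_rpow_enorm_lt_top two_ne_zero ENNReal.ofNat_ne_top).1 hg.2).ne
  have hG_vadd (h : Hsub p) (ω : Vil p) : G (h +ᵥ ω) = G ω := by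
    simp only [G, AddSubgroup.vadd_def, vadd_eq_add]
    rw [← (Equiv.addLeft h).tsum_eq (fun r : Hsub p => ‖g (ω + r)‖ₑ ^ 2)]
    exact tsum_congr fun r => by simp only [Equiv.coe_addLeft, AddSubgroup.coe_add]; ac_rfl
  have hG_top_Uset : S.ν ({ω | G ω = ∞} ∩ Uset p) = 0 := by
    have hG : AEMeasurable G S.ν := AEMeasurable.tsum fun h : Hsub p =>
      hg_sq.comp_quasiMeasurePreserving (S.ν_inv h).quasiMeasurePreserving
    have := ae_lt_top' hG.restrict hG_int
    rw [ae_iff, Measure.restrict_apply' Vil.measurableSet_Uset] at this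
    simpa only [not_lt, top_le_iff] using this
  have hG_top : S.ν {ω | G ω = ∞} = 0 := by
    refine S.isAddFundamentalDomain_Uset.measure_zero_of_invariant _ (fun h => ?_) hG_top_Uset
    ext ω
    simp only [Set.mem_vadd_set_iff_neg_vadd_mem, Set.mem_ofPred_eq, hG_vadd]
  filter_upwards [measure_eq_zero_iff_ae_notMem.1 hG_top] with ω hω
  have : ∑' h : Hsub p, ‖g (ω + h) ^ 2‖ₑ ≠ ∞ := by simpa only [enorm_pow] using hω
  simpa only [norm_pow] using tsum_enorm_ne_top_iff_summable_norm.1 this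

lemma ae_shiftMap_coset_eq {g f m : Vil p → ℂ} (hm : ∀ ω, ∀ h ∈ Hsub p, m (ω + h) = m ω)
    (h : ∀ᵐ ω ∂S.ν, g (shiftMap p ω) = m ω * f ω) :
    ∀ᵐ ω ∂S.ν, ∀ (ζ : ZMod p) (r : Hsub p),
      g (shiftMap p (ω + dotEl p ζ + r)) = m (ω + dotEl p ζ) * f (ω + dotEl p ζ + r) := by
  filter_upwards [S.ae_forall_add h fun x : ZMod p × Hsub p => dotEl p x.1 + x.2] with ω hω ζ r
  rw [add_assoc, hω (ζ, r), ← add_assoc, hm _ r r.2]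

end VilenkinSetting

theorem bracket_of_refinable_pair_general
    (p : ℕ) (hp : p.Prime) (S : VilenkinSetting p) (φ f₁ f₂ : Lp ℂ 2 S.μ)
    (m₁ m₂ : Vil p → ℂ) (hm₁ : S.IsFilter m₁) (hm₂ : S.IsFilter m₂)
    (h₁ : ∀ᵐ ω ∂S.ν, S.F f₁ (shiftMap p ω) = m₁ ω * S.F φ ω)
    (h₂ : ∀ᵐ ω ∂S.ν, S.F f₂ (shiftMap p ω) = m₂ ω * S.F φ ω) :
    ∀ᵐ ω ∂S.ν,
      VilenkinSetting.brkt (S.F f₁) (S.F f₂) (shiftMap p ω) =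
        ∑ ζ ∈ Finset.range p,
          m₁ (ω + dotEl p (ζ : ZMod p)) * conj (m₂ (ω + dotEl p (ζ : ZMod p))) *
            VilenkinSetting.brkt (S.F φ) (S.F φ) (ω + dotEl p (ζ : ZMod p)) := by
  have : NeZero p := ⟨hp.ne_zero⟩
  filter_upwards [S.ae_shiftMap_coset_eq hm₁.1 h₁, S.ae_shiftMap_coset_eq hm₂.1 h₂,
    S.ae_forall_add (S.ae_summable_norm_sq_add (Lp.memLp (S.F φ))) (dotEl p)] with ω e₁ e₂ hφ
  have hterm (ζ : ZMod p) (r : Hsub p) :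
      S.F f₁ (shiftMap p (ω + dotEl p ζ + r)) * conj (S.F f₂ (shiftMap p (ω + dotEl p ζ + r))) =
        m₁ (ω + dotEl p ζ) * conj (m₂ (ω + dotEl p ζ)) *
          ((‖S.F φ (ω + dotEl p ζ + r)‖ ^ 2 : ℝ) : ℂ) := by
    rw [e₁, e₂, map_mul, mul_mul_mul_comm, Complex.mul_conj, Complex.normSq_eq_norm_sq]
  have hsum (ζ : ZMod p) : Summable fun r : Hsub p => ‖S.F f₁ (shiftMap p (ω + dotEl p ζ + r)) *
      conj (S.F f₂ (shiftMap p (ω + dotEl p ζ + r)))‖ := by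
    simpa only [hterm, norm_mul, Complex.norm_real, norm_pow, norm_norm]
      using (hφ ζ).mul_left ‖m₁ (ω + dotEl p ζ) * conj (m₂ (ω + dotEl p ζ))‖
  rw [VilenkinSetting.brkt_shiftMap _ _ ω hsum, Finset.sum_range_eq_sum_zmod p fun ζ =>
    m₁ (ω + dotEl p ζ) * conj (m₂ (ω + dotEl p ζ)) *
      VilenkinSetting.brkt (S.F φ) (S.F φ) (ω + dotEl p ζ)]
  refine Finset.sum_congr rfl fun ζ _ => ?_
  rw [VilenkinSetting.brkt_self_eq_tsum_norm_sq, ← tsum_mul_left]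
  exact tsum_congr (hterm ζ)

/-- For `f₁, f₂ ∈ ⟨φ⟩` with `f̂ᵢ(Bω) = mᵢ(ω)φ̂(ω)` a.e.
(`mᵢ ∈ L²(U*)` extended `H⊥`-periodically), for a.e. `ω`:
`[f̂₁, f̂₂](Bω) = Σ_{ζ=0}^{p−1} m₁(ω⊕0.ζ) conj(m₂(ω⊕0.ζ)) P_φ(ω⊕0.ζ)`
(where `P_φ = [φ̂, φ̂]`). -/
theorem bracket_of_refinable_pair
    (p : ℕ) (hp : p.Prime) (S : VilenkinSetting p) (φ f₁ f₂ : Lp ℂ 2 S.μ)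
    (hf₁ : f₁ ∈ S.pSIS φ) (hf₂ : f₂ ∈ S.pSIS φ)
    (m₁ m₂ : Vil p → ℂ) (hm₁ : S.IsFilter m₁) (hm₂ : S.IsFilter m₂)
    (h₁ : ∀ᵐ ω ∂S.ν, S.F f₁ (shiftMap p ω) = m₁ ω * S.F φ ω)
    (h₂ : ∀ᵐ ω ∂S.ν, S.F f₂ (shiftMap p ω) = m₂ ω * S.F φ ω) :
    ∀ᵐ ω ∂S.ν,
      VilenkinSetting.brkt (S.F f₁) (S.F f₂) (shiftMap p ω) =
        ∑ ζ ∈ Finset.range p,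
          m₁ (ω + dotEl p (ζ : ZMod p)) * conj (m₂ (ω + dotEl p (ζ : ZMod p))) *
            VilenkinSetting.brkt (S.F φ) (S.F φ) (ω + dotEl p (ζ : ZMod p)) :=
  bracket_of_refinable_pair_general p hp S φ f₁ f₂ m₁ m₂ hm₁ hm₂ h₁ h₂
end
end

section
/- In the Cantor dyadic group FMRA setting, if the set E = {ω ∈ Δ₂ : m(σω) = m(σω + 0.1) = 0} has positive measure, then W₀ is not a principal shift-invariant space; i.e., there exists no ψ ∈ W₀ with W₀ = ⟨ψ⟩. -/
/-!
Common setting: the Vilenkin group `Vil p` (sequences `ℤ → ZMod p` vanishing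
below some index), its discrete subgroup `H`, the neighbourhood `U`,
the shift automorphism, the generalized characters, and a bundled structure
`VilenkinSetting` carrying the Haar measures on the group and on its dual
(realized on the same underlying sequence space), the Plancherel (Fourier)
transform, translations and the dilation operator, with their standard
compatibility properties.
-/

open MeasureTheory Filter Topology
open scoped ENNReal NNReal Pointwise Classical ComplexConjugate

noncomputable section

/-!
Suppose `W₀ = ⟨ψ⟩`. Every element of a principal shift-invariant space `⟨g⟩` is a limit of
trigonometric polynomials times `g`, so for almost every `ω` its fibre `(ĝ(ω + n))_{n ∈ Λ}` is
proportional to that of `ĝ` (a line in `ℂ^Λ` is closed).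

Apply this to the `W₀`-components `𝔻f - P_{V₀}𝔻f` of `f = φ` and `f = T_e φ`, `e = 1 ∈ Λ`, at a
point `ω ∈ E`. There the refinement equation and `m(σω) = m(σω + 0.1) = 0` kill the whole fibre
of `φ̂`, hence that of every element of `V₀ = ⟨φ⟩`; so the two fibres are `2^{-1/2} φ̂(σ(ω + n))`
and `2^{-1/2} χ(e, σ(ω + n)) φ̂(σ(ω + n))`. The character is `1` on `Λ₁` and `-1` on `Λ ∖ Λ₁`,
and `ω ∈ Δ₂` gives nonzero entries of `φ̂ ∘ σ` on both parts, so the two fibres cannot both be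
multiples of the fibre of `ψ̂`. Almost-everywhere statements may be evaluated at such an `ω`
because `σ` pushes the Haar measure forward to twice itself.
-/

namespace Vil

variable {p : ℕ}

@[simp] lemma shiftMap_apply (x : Vil p) (j : ℤ) :
    ((shiftMap p x : Vil p) : ℤ → ZMod p) j = (x : ℤ → ZMod p) (j + 1) := rfl

@[simp] lemma shiftMap_symm_apply (x : Vil p) (j : ℤ) :
    (((shiftMap p).symm x : Vil p) : ℤ → ZMod p) j = (x : ℤ → ZMod p) (j - 1) := rfl

instance : BorelSpace (Vil p) := ⟨rfl⟩

def single (i : ℤ) (a : ZMod p) : Vil p :=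
  ⟨fun j => if j = i then a else 0, ⟨i, fun j hj => if_neg (by omega)⟩⟩

lemma single_apply (i : ℤ) (a : ZMod p) (j : ℤ) :
    ((single i a : Vil p) : ℤ → ZMod p) j = if j = i then a else 0 := rfl

lemma single_mem_Hsub {i : ℤ} (hi : i ≤ 0) (a : ZMod p) : single i a ∈ Hsub p :=
  fun j hj => if_neg (by omega)

/-- The coset `x + U_l`. -/
def cyl (x : Vil p) (l : ℤ) : Set (Vil p) :=
  {w | ∀ j ≤ l, (w : ℤ → ZMod p) j = (x : ℤ → ZMod p) j}

def cyls (p : ℕ) : Set (Set (Vil p)) := {s | ∃ (x : Vil p) (l : ℤ), s = cyl x l}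

lemma image_add_UsetL (x : Vil p) (l : ℤ) : (x + ·) '' UsetL p l = cyl x l := by
  ext w
  constructor
  · rintro ⟨u, hu, rfl⟩ j hj
    simp [hu j hj]
  · intro hw
    refine ⟨w - x, fun j hj => ?_, add_sub_cancel x w⟩
    simp [hw j hj]

lemma cyl_eq_preimage_add (x : Vil p) (l : ℤ) : cyl x l = (· + -x) ⁻¹' UsetL p l := by
  ext w
  simp [cyl, UsetL, ← sub_eq_add_neg, sub_eq_zero]

lemma topology_eq_generateFrom_cyls :
    instTopologicalSpaceVil p = TopologicalSpace.generateFrom (cyls p) := by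
  simp only [instTopologicalSpaceVil, image_add_UsetL]
  rfl

lemma isOpen_cyl (x : Vil p) (l : ℤ) : IsOpen (cyl x l) :=
  TopologicalSpace.isOpen_generateFrom_of_mem ⟨x, l, (image_add_UsetL x l).symm⟩

lemma measurableSet_cyl (x : Vil p) (l : ℤ) : MeasurableSet (cyl x l) :=
  (isOpen_cyl x l).measurableSet

lemma measurableSet_UsetL (l : ℤ) : MeasurableSet (UsetL p l) :=
  measurableSet_cyl 0 l

lemma isPiSystem_cyls : IsPiSystem (cyls p) := by
  rintro _ ⟨x, l, rfl⟩ _ ⟨y, l', rfl⟩ ⟨z, hzx, hzy⟩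
  refine ⟨z, max l l', Set.ext fun w => ⟨fun ⟨hx, hy⟩ j hj => ?_, fun hw => ⟨?_, ?_⟩⟩⟩
  · rcases le_max_iff.mp hj with hj | hj
    · rw [hx j hj, hzx j hj]
    · rw [hy j hj, hzy j hj]
  · exact fun j hj => (hw j (le_max_of_le_left hj)).trans (hzx j hj)
  · exact fun j hj => (hw j (le_max_of_le_right hj)).trans (hzy j hj)

lemma countable_setOf_forall_gt_eq_zero (l : ℤ) :
    {x : Vil p | ∀ j > l, (x : ℤ → ZMod p) j = 0}.Countable := by
  have : Countable (ZMod p) := by cases p <;> dsimp [ZMod] <;> infer_instance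
  have hfin : ∀ x : {x : Vil p | ∀ j > l, (x : ℤ → ZMod p) j = 0},
      (Function.support ((x : Vil p) : ℤ → ZMod p)).Finite := by
    rintro ⟨x, hx⟩
    obtain ⟨k, hk⟩ := x.2
    refine (Set.finite_Icc k l).subset fun j hj => ⟨?_, ?_⟩
    · by_contra! h
      exact hj (hk j h)
    · by_contra! h
      exact hj (hx j h)
  refine Set.countable_coe_iff.mp (Function.Injective.countable
    (f := fun x => Finsupp.ofSupportFinite _ (hfin x)) fun x y hxy => ?_)
  exact Subtype.ext (Subtype.ext (congrArg (⇑) hxy))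

instance : Countable (Hsub p) :=
  (countable_setOf_forall_gt_eq_zero 0).to_subtype

def trunc (x : Vil p) (l : ℤ) : Vil p :=
  ⟨fun j => if j ≤ l then (x : ℤ → ZMod p) j else 0, by
    obtain ⟨k, hk⟩ := x.2
    exact ⟨k, fun j hj => by simp [hk j hj]⟩⟩

lemma cyl_trunc (x : Vil p) (l : ℤ) : cyl (trunc x l) l = cyl x l := by
  ext w
  refine forall₂_congr fun j hj => ?_
  simp [trunc, hj]

lemma countable_cyls : (cyls p).Countable := by
  refine (Set.countable_iUnion fun l : ℤ =>
    (countable_setOf_forall_gt_eq_zero l).image fun y => cyl y l).mono ?_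
  rintro _ ⟨x, l, rfl⟩
  refine Set.mem_iUnion.mpr ⟨l, trunc x l, fun j hj => ?_, cyl_trunc x l⟩
  simp [trunc, not_le.mpr hj]

instance : SecondCountableTopology (Vil p) :=
  ⟨⟨cyls p, countable_cyls, topology_eq_generateFrom_cyls⟩⟩

lemma measurableSpace_eq_generateFrom_cyls :
    (inferInstance : MeasurableSpace (Vil p)) = MeasurableSpace.generateFrom (cyls p) :=
  borel_eq_generateFrom_of_subbasis topology_eq_generateFrom_cyls

lemma shiftMap_symm_preimage_cyl (x : Vil p) (l : ℤ) :
    (shiftMap p).symm ⁻¹' cyl x l = cyl (shiftMap p x) (l - 1) := by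
  ext w
  refine ⟨fun h j hj => ?_, fun h j hj => ?_⟩
  · simpa using h (j + 1) (by omega)
  · simpa using h (j - 1) (by omega)

lemma continuous_shiftMap_symm : Continuous (shiftMap p).symm := by
  refine continuous_generateFrom_iff.mpr ?_
  rintro _ ⟨x, l, rfl⟩
  rw [image_add_UsetL, shiftMap_symm_preimage_cyl]
  exact isOpen_cyl _ _

lemma iUnion_cyl_single (l : ℤ) :
    ⋃ a : ZMod p, cyl (single (l + 1) a) (l + 1) = UsetL p l := by
  ext w
  simp only [Set.mem_iUnion, cyl, UsetL, Set.mem_ofPred_eq, single_apply]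
  refine ⟨fun ⟨a, ha⟩ j hj => by simpa [show j ≠ l + 1 by omega] using ha j (by omega),
    fun hw => ⟨(w : ℤ → ZMod p) (l + 1), fun j hj => ?_⟩⟩
  rcases hj.lt_or_eq with hj | rfl
  · simpa [show j ≠ l + 1 by omega] using hw j (by omega)
  · simp

lemma pairwise_disjoint_cyl_single (l : ℤ) :
    Pairwise (Function.onFun Disjoint fun a : ZMod p => cyl (single (l + 1) a) (l + 1)) := by
  refine fun a b hab => Set.disjoint_left.mpr fun w ha hb => hab ?_
  simpa [single_apply] using (ha (l + 1) le_rfl).symm.trans (hb (l + 1) le_rfl)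

end Vil

lemma vilChar_add_of_mem_Hsub {p : ℕ} {h n : Vil p} (hh : h ∈ Hsub p) (hn : n ∈ Hsub p)
    (ω : Vil p) : vilChar p h (ω + n) = vilChar p h ω := by
  suffices hsum : ∑ᶠ j : ℤ, (h : ℤ → ZMod p) j * ((ω + n : Vil p) : ℤ → ZMod p) (1 - j)
      = ∑ᶠ j : ℤ, (h : ℤ → ZMod p) j * (ω : ℤ → ZMod p) (1 - j) by
    rw [vilChar, vilChar, hsum]
  refine finsum_congr fun j => ?_
  by_cases hj : 0 < j
  · simp [hh j hj]
  · simp [hn (1 - j) (by omega)]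

lemma eq_zero_of_eq_smul_of_mul_eq_smul {ι 𝕜 : Type*} [Field 𝕜] [CharZero 𝕜]
    {a χ v : ι → 𝕜} {c₁ c₂ : 𝕜} (h₁ : a = c₁ • v) (h₂ : χ * a = c₂ • v) {i j : ι}
    (hi : χ i = 1) (hj : χ j = -1) (hai : a i ≠ 0) : a j = 0 := by
  have hc : c₁ = c₂ := by
    have hvi : v i ≠ 0 := fun h => hai (by simp [h₁, h])
    have := congrFun h₂ i
    simp only [Pi.mul_apply, hi, one_mul, h₁, Pi.smul_apply, smul_eq_mul] at this
    exact mul_right_cancel₀ hvi this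
  have := congrFun h₂ j
  rw [Pi.mul_apply, hj, neg_one_mul, ← hc, ← h₁] at this
  exact CharZero.eq_neg_self_iff.mp this.symm

namespace VilenkinSetting

open Vil

variable {p : ℕ} (S : VilenkinSetting p)

lemma measure_cyl (x : Vil p) (l : ℤ) : S.ν (cyl x l) = S.ν (UsetL p l) := by
  rw [cyl_eq_preimage_add]
  exact (S.ν_inv (-x)).measure_preimage (measurableSet_UsetL l).nullMeasurableSet

lemma measure_UsetL_eq_mul [NeZero p] (l : ℤ) :
    S.ν (UsetL p l) = p * S.ν (UsetL p (l + 1)) := by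
  rw [← iUnion_cyl_single, measure_iUnion (pairwise_disjoint_cyl_single l)
    fun a => measurableSet_cyl _ _]
  simp [measure_cyl]

lemma map_shiftMap_symm [NeZero p] : S.ν.map (shiftMap p).symm = (p : ℝ≥0∞) • S.ν := by
  have hmap : ∀ (x : Vil p) (l : ℤ),
      S.ν.map (shiftMap p).symm (cyl x l) = p * S.ν (cyl x l) := by
    intro x l
    rw [Measure.map_apply continuous_shiftMap_symm.measurable (measurableSet_cyl x l),
      shiftMap_symm_preimage_cyl, measure_cyl, measure_cyl, measure_UsetL_eq_mul,
      sub_add_cancel]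
  have hcover : {s | ∃ x : Vil p, s = cyl x 0} ⊆ cyls p := fun _ ⟨x, hx⟩ => ⟨x, 0, hx⟩
  refine Measure.ext_of_generateFrom_of_cover_subset measurableSpace_eq_generateFrom_cyls
    isPiSystem_cyls hcover (countable_cyls.mono hcover)
    (Set.eq_univ_of_forall fun w => Set.mem_sUnion.mpr ⟨cyl w 0, ⟨w, rfl⟩, fun _ _ => rfl⟩) ?_ ?_
  · rintro _ ⟨x, rfl⟩
    rw [hmap, measure_cyl, ← Uset, S.ν_U, mul_one]
    exact ENNReal.natCast_ne_top p
  · rintro _ ⟨x, l, rfl⟩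
    rw [hmap, Measure.smul_apply, smul_eq_mul]

lemma ae_comp_shiftMap_symm [NeZero p] {P : Vil p → Prop} (h : ∀ᵐ ω ∂S.ν, P ω) :
    ∀ᵐ ω ∂S.ν, P ((shiftMap p).symm ω) :=
  (Measure.QuasiMeasurePreserving.mk continuous_shiftMap_symm.measurable
    (S.map_shiftMap_symm ▸ Measure.smul_absolutelyContinuous)).ae h

lemma ae_forall_add_s11 {P : Vil p → Prop} (h : ∀ᵐ ω ∂S.ν, P ω) :
    ∀ᵐ ω ∂S.ν, ∀ n : Hsub p, P (ω + n) :=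
  ae_all_iff.mpr fun n => (S.ν_inv n).quasiMeasurePreserving.ae h

/-- The fibre `ĝ_{‖ω}`. -/
def fiber (g : Vil p → ℂ) (ω : Vil p) : Hsub p → ℂ := fun n => g (ω + n)

lemma ae_fiber_F_T_comp_shiftMap_symm [NeZero p] {h : Vil p} (hh : h ∈ Hsub p)
    (g : Lp ℂ 2 S.μ) :
    ∀ᵐ ω ∂S.ν, fiber (S.F (S.T h g) ∘ (shiftMap p).symm) ω =
      fiber (vilChar p h ∘ (shiftMap p).symm) ω * fiber (S.F g ∘ (shiftMap p).symm) ω := by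
  filter_upwards [S.ae_forall_add_s11 (S.ae_comp_shiftMap_symm (S.F_T h hh g))] with ω hω
  exact funext hω

lemma T_mem_pSIS (g : Lp ℂ 2 S.μ) (h : Hsub p) : S.T h g ∈ S.pSIS g :=
  Submodule.le_topologicalClosure _ (Submodule.subset_span ⟨h, rfl⟩)

lemma exists_periodic_mul_of_mem_span {g f : Lp ℂ 2 S.μ}
    (hf : f ∈ Submodule.span ℂ (Set.range fun h : Hsub p => S.T h g)) :
    ∃ P : Vil p → ℂ, (∀ ω, ∀ n ∈ Hsub p, P (ω + n) = P ω) ∧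
      S.F f =ᵐ[S.ν] fun ω => P ω * S.F g ω := by
  obtain ⟨c, rfl⟩ := Finsupp.mem_span_range_iff_exists_finsupp.mp hf
  refine ⟨fun ω => c.sum fun h a => a * vilChar p h ω, fun ω n hn => ?_, ?_⟩
  · exact Finsupp.sum_congr fun h _ => by rw [vilChar_add_of_mem_Hsub h.2 hn]
  have hterm : ∀ᵐ ω ∂S.ν, ∀ h : Hsub p,
      S.F (c h • S.T h g) ω = c h * (vilChar p h ω * S.F g ω) := by
    refine ae_all_iff.mpr fun h => ?_
    rw [map_smul]
    filter_upwards [Lp.coeFn_smul (c h) (S.F (S.T h g)), S.F_T h h.2 g] with ω h₁ h₂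
    rw [h₁, Pi.smul_apply, h₂, smul_eq_mul]
  simp only [Finsupp.sum, map_sum]
  filter_upwards [Lp.coeFn_fun_finsetSum c.support fun h => S.F (c h • S.T h g), hterm]
    with ω h₁ h₂
  simp only [h₁, h₂, Finset.sum_mul, mul_assoc]

lemma ae_exists_fiber_eq_smul {g f : Lp ℂ 2 S.μ} (hf : f ∈ S.pSIS g) :
    ∀ᵐ ω ∂S.ν, ∃ c : ℂ, fiber (S.F f) ω = c • fiber (S.F g) ω := by
  obtain ⟨u, hu, hlim⟩ := mem_closure_iff_seq_limit.mp hf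
  choose P hPper hP using fun k => S.exists_periodic_mul_of_mem_span (hu k)
  have hFlim : Tendsto (fun k => S.F (u k)) atTop (𝓝 (S.F f)) :=
    (S.F.continuous.tendsto f).comp hlim
  obtain ⟨ns, -, hae⟩ := (tendstoInMeasure_of_tendsto_Lp hFlim).exists_seq_tendsto_ae
  filter_upwards [S.ae_forall_add_s11 (ae_all_iff.mpr hP), S.ae_forall_add_s11 hae] with ω hPω hω
  have hspan : fiber (S.F f) ω ∈ ℂ ∙ fiber (S.F g) ω := by
    refine (Submodule.closed_of_finiteDimensional _).mem_of_tendsto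
      (tendsto_pi_nhds.mpr fun n => hω n) (Eventually.of_forall fun i => ?_)
    have hfib : fiber (S.F (u (ns i))) ω = P (ns i) ω • fiber (S.F g) ω := by
      ext n
      simp [fiber, hPω n (ns i), hPper (ns i) ω n n.2]
    change fiber (S.F (u (ns i))) ω ∈ ℂ ∙ fiber (S.F g) ω
    exact hfib ▸ Submodule.smul_mem _ _ (Submodule.mem_span_singleton_self _)
  obtain ⟨c, hc⟩ := Submodule.mem_span_singleton.mp hspan
  exact ⟨c, hc.symm⟩

section Wavelet

variable {V : ℤ → Submodule ℂ (Lp ℂ 2 S.μ)} [(V 0).HasOrthogonalProjection]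

lemma dil_sub_starProjection_mem_Wcompl (hV : S.IsLadder V) {f : Lp ℂ 2 S.μ} (hf : f ∈ V 0) :
    S.Dil f - (V 0).starProjection (S.Dil f) ∈ S.Wcompl V := by
  have hV01 : V 0 ≤ V 1 := hV.2.1 0
  have hDil : S.Dil f ∈ V 1 := (hV.2.2.1 0 f).mp hf
  exact ⟨sub_mem hDil (hV01 ((V 0).starProjection_apply_mem _)),
    (V 0).sub_starProjection_mem_orthogonal _⟩

lemma ae_fiber_dil_sub_starProjection {φ : Lp ℂ 2 S.μ} (hφ : S.pSIS φ = V 0)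
    (f : Lp ℂ 2 S.μ) :
    ∀ᵐ ω ∂S.ν, fiber (S.F φ) ω = 0 →
      fiber (S.F (S.Dil f - (V 0).starProjection (S.Dil f))) ω =
        ((Real.sqrt p)⁻¹ : ℂ) • fiber (S.F f ∘ (shiftMap p).symm) ω := by
  have hproj : (V 0).starProjection (S.Dil f) ∈ S.pSIS φ := by
    rw [hφ]
    exact (V 0).starProjection_apply_mem _
  filter_upwards [S.ae_exists_fiber_eq_smul hproj, S.ae_forall_add_s11 (S.F_Dil f),
    S.ae_forall_add_s11 (Lp.coeFn_sub (S.F (S.Dil f)) (S.F ((V 0).starProjection (S.Dil f))))]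
    with ω ⟨c, hc⟩ hDil hsub hvan
  rw [hvan, smul_zero] at hc
  ext n
  have hproj0 : S.F ((V 0).starProjection (S.Dil f)) (ω + n) = 0 := congrFun hc n
  simp only [fiber, map_sub, Function.comp_apply, Pi.smul_apply, smul_eq_mul]
  rw [hsub n, Pi.sub_apply, hDil n, hproj0, sub_zero]

end Wavelet

lemma exists_ne_zero_of_sumShift_ne_zero {φ : Lp ℂ 2 S.μ} {s : Set (Vil p)} {ω : Vil p}
    (h : S.sumShift φ s ω ≠ 0) : ∃ n : s, S.F φ ((shiftMap p).symm (ω + n)) ≠ 0 := by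
  by_contra! hzero
  exact h (ENNReal.tsum_eq_zero.mpr fun n => by rw [hzero n]; simp)

end VilenkinSetting

namespace Vil

lemma mem_Lam1_iff {p : ℕ} {n : Vil p} :
    n ∈ Lam1 p ↔ n ∈ Hsub p ∧ (n : ℤ → ZMod p) 0 = 0 := by
  refine and_congr_right fun hn => ⟨fun h => by simpa using h 1 one_pos, fun h j hj => ?_⟩
  rcases (show (1 : ℤ) ≤ j by omega).eq_or_lt with rfl | hj
  · simpa using h
  · simpa using hn (j - 1) (by omega)

lemma apply_zero_eq_one_of_mem_LamO {n : Vil 2} (hn : n ∈ LamO 2) :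
    (n : ℤ → ZMod 2) 0 = 1 := by
  have := mt (mem_Lam1_iff.mpr ∘ And.intro hn.1) hn.2
  revert this
  generalize (n : ℤ → ZMod 2) 0 = a
  revert a
  decide

lemma add_self_eq_zero (x : Vil 2) : x + x = 0 :=
  Subtype.ext (funext fun _ => CharTwo.add_self_eq_zero _)

lemma shiftMap_symm_add_dotEl_mem_Hsub {n : Vil 2} (hn : n ∈ LamO 2) :
    (shiftMap 2).symm n + dotEl 2 1 ∈ Hsub 2 := by
  intro j hj
  rcases (show (1 : ℤ) ≤ j by omega).eq_or_lt with rfl | hj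
  · simp [dotEl, apply_zero_eq_one_of_mem_LamO hn, CharTwo.add_self_eq_zero]
  · simpa [dotEl, show j ≠ 1 by omega] using hn.1 (j - 1) (by omega)

lemma vilChar_single_zero_one (α : Vil 2) :
    vilChar 2 (single 0 1) α = (-1) ^ ((α : ℤ → ZMod 2) 1).val := by
  have hsum : ∑ᶠ j : ℤ, ((single 0 1 : Vil 2) : ℤ → ZMod 2) j * (α : ℤ → ZMod 2) (1 - j)
      = (α : ℤ → ZMod 2) 1 := by
    rw [finsum_eq_single _ 0 fun j hj => by simp [single_apply, hj]]
    simp [single_apply]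
  rw [vilChar, hsum, ← Complex.exp_pi_mul_I, ← Complex.exp_nat_mul]
  congr 1
  push_cast
  ring

lemma vilChar_single_shiftMap_symm_add {ω : Vil 2} (hω : ω ∈ Uset 2) (n : Vil 2) :
    vilChar 2 (single 0 1) ((shiftMap 2).symm (ω + n)) = (-1) ^ ((n : ℤ → ZMod 2) 0).val := by
  simp [vilChar_single_zero_one, hω 0 le_rfl]

lemma vilChar_single_shiftMap_symm_add_of_mem_Lam1 {ω n : Vil 2} (hω : ω ∈ Uset 2)
    (hn : n ∈ Lam1 2) : vilChar 2 (single 0 1) ((shiftMap 2).symm (ω + n)) = 1 := by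
  rw [vilChar_single_shiftMap_symm_add hω, (mem_Lam1_iff.mp hn).2, ZMod.val_zero, pow_zero]

lemma vilChar_single_shiftMap_symm_add_of_mem_LamO {ω n : Vil 2} (hω : ω ∈ Uset 2)
    (hn : n ∈ LamO 2) : vilChar 2 (single 0 1) ((shiftMap 2).symm (ω + n)) = -1 := by
  rw [vilChar_single_shiftMap_symm_add hω, apply_zero_eq_one_of_mem_LamO hn, ZMod.val_one,
    pow_one]

end Vil

namespace VilenkinSetting

open Vil

variable (S : VilenkinSetting 2)

lemma apply_shiftMap_symm_eq_zero_of_mem_blockedSet {φ : Lp ℂ 2 S.μ} {m : Vil 2 → ℂ}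
    (hm : ∀ ω : Vil 2, ∀ h ∈ Hsub 2, m (ω + h) = m ω) {ω : Vil 2}
    (hω : ω ∈ S.blockedSet φ m) (n : Hsub 2) : m ((shiftMap 2).symm (ω + n)) = 0 := by
  rw [map_add]
  by_cases hn : (n : Vil 2) ∈ Lam1 2
  · rw [hm _ _ hn.2, hω.2.1]
  · have hsplit : (shiftMap 2).symm ω + (shiftMap 2).symm n
        = ((shiftMap 2).symm ω + dotEl 2 1) + ((shiftMap 2).symm n + dotEl 2 1) := by
      rw [add_add_add_comm, Vil.add_self_eq_zero, add_zero]
    rw [hsplit, hm _ _ (shiftMap_symm_add_dotEl_mem_Hsub ⟨n.2, hn⟩), hω.2.2]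

lemma ae_fiber_eq_zero_of_mem_blockedSet {φ : Lp ℂ 2 S.μ} {m : Vil 2 → ℂ}
    (hm : ∀ ω : Vil 2, ∀ h ∈ Hsub 2, m (ω + h) = m ω)
    (href : ∀ᵐ ω ∂S.ν, S.F φ (shiftMap 2 ω) = m ω * S.F φ ω) :
    ∀ᵐ ω ∂S.ν, ω ∈ S.blockedSet φ m → fiber (S.F φ) ω = 0 := by
  filter_upwards [S.ae_forall_add_s11 (S.ae_comp_shiftMap_symm href)] with ω h hω
  ext n
  have := h n
  rwa [AddEquiv.apply_symm_apply, S.apply_shiftMap_symm_eq_zero_of_mem_blockedSet hm hω n,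
    zero_mul] at this

end VilenkinSetting

open VilenkinSetting Vil in
/-- (Cantor dyadic group, `p = 2`.) If the set
`E = {ω ∈ Δ₂ : m(σω) = m(σω + 0.1) = 0}` has positive measure, then `W₀` is
not a principal shift-invariant space. -/
theorem W0_not_principal_of_blocked_set_pos
    (S : VilenkinSetting 2) (V : ℤ → Submodule ℂ (Lp ℂ 2 S.μ))
    (φ : Lp ℂ 2 S.μ) (hV : S.IsFMRA V φ)
    (m : Vil 2 → ℂ) (hm : S.IsFilter m)
    (href : ∀ᵐ ω ∂S.ν, S.F φ (shiftMap 2 ω) = m ω * S.F φ ω)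
    (hE : 0 < S.ν (S.blockedSet φ m)) :
    ¬ ∃ ψ : Lp ℂ 2 S.μ, ψ ∈ S.Wcompl V ∧ S.pSIS ψ = S.Wcompl V := by
  rintro ⟨ψ, -, hψ⟩
  obtain ⟨-, -, hV, hφ, -, -, hφV, -⟩ := hV
  have : CompleteSpace (V 0) := (hV.1 0).completeSpace_coe
  let e : Hsub 2 := ⟨single 0 1, single_mem_Hsub le_rfl 1⟩
  have hwψ : ∀ f ∈ V 0, S.Dil f - (V 0).starProjection (S.Dil f) ∈ S.pSIS ψ :=
    fun f hf => hψ ▸ S.dil_sub_starProjection_mem_Wcompl hV hf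
  obtain ⟨ω, hωE, hvan, hw₁, hw₂, ⟨c₁, hc₁⟩, ⟨c₂, hc₂⟩, hT⟩ :=
    Measure.exists_mem_of_measure_ne_zero_of_ae hE.ne' <| ae_restrict_of_ae <|
      (S.ae_fiber_eq_zero_of_mem_blockedSet hm.1 href).and <|
      (S.ae_fiber_dil_sub_starProjection hφV φ).and <|
      (S.ae_fiber_dil_sub_starProjection hφV (S.T e φ)).and <|
      (S.ae_exists_fiber_eq_smul (hwψ φ hφ)).and <|
      (S.ae_exists_fiber_eq_smul (hwψ _ (hφV ▸ S.T_mem_pSIS φ e))).and <|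
      S.ae_fiber_F_T_comp_shiftMap_symm e.2 φ
  rw [hw₁ (hvan hωE)] at hc₁
  rw [hw₂ (hvan hωE), hT, ← mul_smul_comm] at hc₂
  obtain ⟨⟨hωU, hΛ₁, hΛO⟩, -⟩ := hωE
  obtain ⟨⟨n₁, hn₁⟩, ha₁⟩ := S.exists_ne_zero_of_sumShift_ne_zero hΛ₁
  obtain ⟨⟨n₂, hn₂⟩, ha₂⟩ := S.exists_ne_zero_of_sumShift_ne_zero hΛO
  have hs : ((Real.sqrt 2)⁻¹ : ℂ) ≠ 0 := by simp
  exact mul_ne_zero hs ha₂ <| eq_zero_of_eq_smul_of_mul_eq_smul hc₁ hc₂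
    (i := ⟨n₁, hn₁.1⟩) (j := ⟨n₂, hn₂.1⟩) (vilChar_single_shiftMap_symm_add_of_mem_Lam1 hωU hn₁)
    (vilChar_single_shiftMap_symm_add_of_mem_LamO hωU hn₂) (mul_ne_zero hs ha₁)
end
end
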